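/- arXiv:1611.05652 — 6 statements merged into one kernel-verified Lean document; each statement's English description precedes it below -/
import Mathlib

section
/- Let G = Z_{k²+1} and A_1 = {0,1,...,k-1}, A_2 = {k,2k,...,k²}. Then {A_1,A_2} is a (k²+1,2,k,1)-SEDF. -/
open Finset

/-- The multiset of external differences `{x - y : x ∈ A, y ∈ B}`. -/
def extDiffs {G : Type*} [AddCommGroup G] [DecidableEq G] (A B : Finset G) : Multiset G :=
  (A ×ˢ B).val.map (fun p => p.1 - p.2)

/-- An `(n, m, k, λ)`-strong external difference family in `G` (with `n = |G|`):
`m ≥ 2` disjoint `k`-subsets such that for each `i` the multiset of external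
differences from `A i` equals `λ` copies of `G \ {0}`. -/
def IsSEDF {G : Type*} [AddCommGroup G] [Fintype G] [DecidableEq G]
    (m k l : ℕ) (A : Fin m → Finset G) : Prop :=
  2 ≤ m ∧ (∀ i, (A i).card = k) ∧
  (∀ i j, i ≠ j → Disjoint (A i) (A j)) ∧
  ∀ i, (∑ j ∈ Finset.univ.erase i, extDiffs (A i) (A j))
      = l • (Finset.univ.erase (0 : G)).val

namespace SEDFhelper

lemma key (k a b a' b' : ℕ) (ha : a < k) (ha' : a' < k)
    (h : a + 1 + k * b = a' + 1 + k * b') : a = a' ∧ b = b' := by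
  have h' : a + k * b = a' + k * b' := by
    have e1 : a + 1 + k * b = (a + k * b) + 1 := by ring
    have e2 : a' + 1 + k * b' = (a' + k * b') + 1 := by ring
    rw [e1, e2] at h
    exact Nat.succ_injective h
  have hmod : (a + k * b) % k = a := by
    rw [Nat.add_mul_mod_self_left, Nat.mod_eq_of_lt ha]
  have hmod' : (a' + k * b') % k = a' := by
    rw [Nat.add_mul_mod_self_left, Nat.mod_eq_of_lt ha']
  have haa : a = a' := by rw [← hmod, ← hmod', h']
  refine ⟨haa, ?_⟩
  have : k * b = k * b' := by
    subst haa
    exact Nat.add_left_cancel h'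
  exact Nat.eq_of_mul_eq_mul_left (show 0 < k by omega) this

lemma cast_inj (k a b : ℕ) (ha : a < k ^ 2 + 1) (hb : b < k ^ 2 + 1)
    (h : (a : ZMod (k ^ 2 + 1)) = (b : ZMod (k ^ 2 + 1))) : a = b := by
  haveI : NeZero (k ^ 2 + 1) := ⟨Nat.succ_ne_zero _⟩
  have := congrArg ZMod.val h
  rwa [ZMod.val_cast_of_lt ha, ZMod.val_cast_of_lt hb] at this

lemma k_lt : ∀ k : ℕ, k < k ^ 2 + 1 := fun k =>
  Nat.lt_succ_of_le (Nat.le_self_pow (by norm_num) k)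

lemma mul_le_sq (k j : ℕ) (hj : j < k) : (j + 1) * k ≤ k ^ 2 := by
  rw [pow_two]
  exact Nat.mul_le_mul_right k hj

/-- value of the first-direction difference -/
lemma rew1 (k i j : ℕ) (hi : i < k) (hj : j < k) :
    (i : ZMod (k ^ 2 + 1)) - (((j + 1) * k : ℕ) : ZMod (k ^ 2 + 1))
      = ((i + 1 + k * (k - 1 - j) : ℕ) : ZMod (k ^ 2 + 1)) := by
  rw [sub_eq_iff_eq_add, ← Nat.cast_add]
  have e : k * (k - 1 - j) + (j + 1) * k = k * k := by
    have h1 : (k - 1 - j) + (j + 1) = k := by omega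
    calc k * (k - 1 - j) + (j + 1) * k = k * ((k - 1 - j) + (j + 1)) := by ring
    _ = k * k := by rw [h1]
  have e2 : i + 1 + k * (k - 1 - j) + (j + 1) * k = i + (k ^ 2 + 1) := by
    calc i + 1 + k * (k - 1 - j) + (j + 1) * k
        = i + 1 + (k * (k - 1 - j) + (j + 1) * k) := by ring
    _ = i + 1 + k * k := by rw [e]
    _ = i + (k ^ 2 + 1) := by rw [pow_two]; ring
  rw [e2, Nat.cast_add, ZMod.natCast_self, add_zero]

lemma bound1 (k i j : ℕ) (hi : i < k) (hj : j < k) :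
    0 < i + 1 + k * (k - 1 - j) ∧ i + 1 + k * (k - 1 - j) < k ^ 2 + 1 := by
  constructor
  · omega
  · have h1 : k * (k - 1 - j) + k = k * ((k - 1 - j) + 1) := by ring
    have h2 : k * ((k - 1 - j) + 1) ≤ k * k := Nat.mul_le_mul_left k (by omega)
    have h3 : k * (k - 1 - j) + k ≤ k * k := h1 ▸ h2
    have h4 : k ^ 2 = k * k := sq k
    rw [h4]
    have := Nat.lt_of_lt_of_le (by omega : i + 1 + k * (k - 1 - j) < k * (k - 1 - j) + k + 1)
      (by omega : k * (k - 1 - j) + k + 1 ≤ k * k + 1)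
    exact this

lemma rew2 (k i j : ℕ) (hi : i < k) (hj : j < k) :
    (((j + 1) * k : ℕ) : ZMod (k ^ 2 + 1)) - (i : ZMod (k ^ 2 + 1))
      = (((j + 1) * k - i : ℕ) : ZMod (k ^ 2 + 1)) := by
  have hle : i ≤ (j + 1) * k := by
    have : 1 * k ≤ (j + 1) * k := Nat.mul_le_mul_right k (by omega)
    omega
  rw [Nat.cast_sub hle]

lemma val2_eq (k i j : ℕ) (hi : i < k) (hj : j < k) :
    (j + 1) * k - i = (k - 1 - i) + 1 + k * j := by
  have e : (j + 1) * k = k * j + k := by ring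
  rw [e]
  omega

end SEDFhelper

open SEDFhelper in
theorem stmt2 (k : ℕ) (hk : 1 ≤ k) :
    IsSEDF 2 k 1
      ![(Finset.range k).image (Nat.cast : ℕ → ZMod (k ^ 2 + 1)),
        (Finset.range k).image (fun i : ℕ => (((i + 1) * k : ℕ) : ZMod (k ^ 2 + 1)))] := by
  haveI : NeZero (k ^ 2 + 1) := ⟨Nat.succ_ne_zero _⟩
  set G := ZMod (k ^ 2 + 1)
  set A1 : Finset G := (Finset.range k).image (Nat.cast : ℕ → G) with hA1
  set A2 : Finset G := (Finset.range k).image (fun i : ℕ => (((i + 1) * k : ℕ) : G)) with hA2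
  -- membership characterizations
  have memA1 : ∀ x : G, x ∈ A1 → ∃ i < k, x = (i : G) := by
    intro x hx
    simp only [hA1, mem_image, mem_range] at hx
    obtain ⟨i, hi, rfl⟩ := hx
    exact ⟨i, hi, rfl⟩
  have memA2 : ∀ x : G, x ∈ A2 → ∃ j < k, x = (((j + 1) * k : ℕ) : G) := by
    intro x hx
    simp only [hA2, mem_image, mem_range] at hx
    obtain ⟨j, hj, rfl⟩ := hx
    exact ⟨j, hj, rfl⟩
  -- cardinalities
  have card1 : A1.card = k := by
    rw [hA1, Finset.card_image_of_injOn, Finset.card_range]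
    intro a ha b hb hab
    simp only [mem_coe, mem_range] at ha hb
    exact cast_inj k a b (lt_trans ha (k_lt k)) (lt_trans hb (k_lt k)) hab
  have card2 : A2.card = k := by
    rw [hA2, Finset.card_image_of_injOn, Finset.card_range]
    intro a ha b hb hab
    simp only [mem_coe, mem_range] at ha hb
    have := cast_inj k ((a + 1) * k) ((b + 1) * k)
      (Nat.lt_succ_of_le (mul_le_sq k a ha)) (Nat.lt_succ_of_le (mul_le_sq k b hb)) hab
    have hk0 : 0 < k := hk
    have h2 := Nat.eq_of_mul_eq_mul_right hk0 this
    omega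
  -- disjointness
  have hdisj : Disjoint A1 A2 := by
    rw [Finset.disjoint_left]
    intro x hx1 hx2
    obtain ⟨i, hi, rfl⟩ := memA1 x hx1
    obtain ⟨j, hj, he⟩ := memA2 _ hx2
    have := cast_inj k i ((j + 1) * k) (lt_trans hi (k_lt k))
      (Nat.lt_succ_of_le (mul_le_sq k j hj)) he
    have hge : k ≤ (j + 1) * k := by
      calc k = 1 * k := (one_mul k).symm
      _ ≤ (j + 1) * k := Nat.mul_le_mul_right k (by omega)
    rw [← this] at hge
    omega
  -- generic multiset lemma
  have main : ∀ A B : Finset G, Disjoint A B → A.card = k → B.card = k →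
      (∀ p : G × G, p ∈ A ×ˢ B → ∀ q : G × G, q ∈ A ×ˢ B →
        p.1 - p.2 = q.1 - q.2 → p = q) →
      extDiffs A B = (Finset.univ.erase (0 : G)).val := by
    intro A B hAB hcA hcB hinj
    have hnodup : (extDiffs A B).Nodup :=
      Multiset.Nodup.map_on (fun p hp q hq => hinj p hp q hq) (A ×ˢ B).nodup
    have hsub : extDiffs A B ⊆ (Finset.univ.erase (0 : G)).val := by
      intro x hx
      simp only [extDiffs, Multiset.mem_map] at hx
      obtain ⟨p, hp, rfl⟩ := hx
      rw [← Finset.mem_def, Finset.mem_product] at hp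
      rw [Finset.mem_def.symm, Finset.mem_erase]
      refine ⟨?_, Finset.mem_univ _⟩
      intro h0
      have : p.1 = p.2 := by
        have := sub_eq_zero.mp h0
        exact this
      exact (Finset.disjoint_left.mp hAB hp.1) (this ▸ hp.2)
    have hle : extDiffs A B ≤ (Finset.univ.erase (0 : G)).val :=
      (Multiset.le_iff_subset hnodup).mpr hsub
    refine Multiset.eq_of_le_of_card_le hle ?_
    have hc1 : Multiset.card (extDiffs A B) = k * k := by
      simp [extDiffs, Multiset.card_map, ← Finset.card_def, Finset.card_product, hcA, hcB]
    have hc2 : Multiset.card (Finset.univ.erase (0 : G)).val = k ^ 2 := by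
      rw [← Finset.card_def, Finset.card_erase_of_mem (Finset.mem_univ _),
        Finset.card_univ, ZMod.card]
      omega
    rw [hc1, hc2, pow_two]
  -- injectivity for A1, A2
  have inj12 : ∀ p : G × G, p ∈ A1 ×ˢ A2 → ∀ q : G × G, q ∈ A1 ×ˢ A2 →
      p.1 - p.2 = q.1 - q.2 → p = q := by
    intro p hp q hq heq
    rw [Finset.mem_product] at hp hq
    obtain ⟨i, hi, hp1⟩ := memA1 p.1 hp.1
    obtain ⟨j, hj, hp2⟩ := memA2 p.2 hp.2
    obtain ⟨i', hi', hq1⟩ := memA1 q.1 hq.1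
    obtain ⟨j', hj', hq2⟩ := memA2 q.2 hq.2
    rw [hp1, hp2, hq1, hq2, rew1 k i j hi hj, rew1 k i' j' hi' hj'] at heq
    have hb := bound1 k i j hi hj
    have hb' := bound1 k i' j' hi' hj'
    have hnat := cast_inj k _ _ hb.2 hb'.2 heq
    obtain ⟨h1, h2⟩ := key k i (k - 1 - j) i' (k - 1 - j') hi hi' hnat
    have hj'' : j = j' := by omega
    ext
    · rw [hp1, hq1, h1]
    · rw [hp2, hq2, hj'']
  have inj21 : ∀ p : G × G, p ∈ A2 ×ˢ A1 → ∀ q : G × G, q ∈ A2 ×ˢ A1 →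
      p.1 - p.2 = q.1 - q.2 → p = q := by
    intro p hp q hq heq
    rw [Finset.mem_product] at hp hq
    obtain ⟨j, hj, hp1⟩ := memA2 p.1 hp.1
    obtain ⟨i, hi, hp2⟩ := memA1 p.2 hp.2
    obtain ⟨j', hj', hq1⟩ := memA2 q.1 hq.1
    obtain ⟨i', hi', hq2⟩ := memA1 q.2 hq.2
    rw [hp1, hp2, hq1, hq2, rew2 k i j hi hj, rew2 k i' j' hi' hj'] at heq
    have hbv : (j + 1) * k - i < k ^ 2 + 1 :=
      Nat.lt_succ_of_le (le_trans (Nat.sub_le _ _) (mul_le_sq k j hj))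
    have hbv' : (j' + 1) * k - i' < k ^ 2 + 1 :=
      Nat.lt_succ_of_le (le_trans (Nat.sub_le _ _) (mul_le_sq k j' hj'))
    have hnat := cast_inj k _ _ hbv hbv' heq
    rw [val2_eq k i j hi hj, val2_eq k i' j' hi' hj'] at hnat
    obtain ⟨h1, h2⟩ := key k (k - 1 - i) j (k - 1 - i') j' (by omega) (by omega) hnat
    have hi'' : i = i' := by omega
    ext
    · rw [hp1, hq1, h2]
    · rw [hp2, hq2, hi'']
  refine ⟨le_refl 2, ?_, ?_, ?_⟩
  · rw [Fin.forall_fin_two]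
    constructor
    · simp only [Matrix.cons_val_zero]; exact card1
    · simp only [Matrix.cons_val_one, Matrix.head_cons]; exact card2
  · rw [Fin.forall_fin_two]
    constructor <;> rw [Fin.forall_fin_two] <;> constructor <;> intro h
    · exact absurd rfl h
    · simp only [Matrix.cons_val_zero, Matrix.cons_val_one, Matrix.head_cons]; exact hdisj
    · simp only [Matrix.cons_val_zero, Matrix.cons_val_one, Matrix.head_cons]; exact hdisj.symm
    · exact absurd rfl h
  · rw [Fin.forall_fin_two]
    have he0 : (Finset.univ.erase (0 : Fin 2)) = {1} := by decide
    have he1 : (Finset.univ.erase (1 : Fin 2)) = {0} := by decide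
    constructor
    · rw [he0, Finset.sum_singleton, one_smul]
      simp only [Matrix.cons_val_zero, Matrix.cons_val_one, Matrix.head_cons]
      exact main A1 A2 hdisj card1 card2 inj12
    · rw [he1, Finset.sum_singleton, one_smul]
      simp only [Matrix.cons_val_zero, Matrix.cons_val_one, Matrix.head_cons]
      exact main A2 A1 hdisj.symm card2 card1 inj21
end

section
/- Suppose there exists an (n,m,k,2)-SEDF with m ≥ 3 and k ≥ 3. Then 2(k-1)(m-2) ≤ k(m-1). -/
open Finset

section Aux
variable {G : Type*} [AddCommGroup G] [Fintype G] [DecidableEq G]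

lemma count_extDiffs (B C : Finset G) (δ : G) :
    Multiset.count δ (extDiffs B C) = ((B ×ˢ C).filter (fun p => p.1 - p.2 = δ)).card := by
  rw [extDiffs, Multiset.count_map]
  rw [Finset.card_def, Finset.filter_val]
  congr 1
  exact Multiset.filter_congr (fun p _ => by constructor <;> exact Eq.symm)

variable {m k : ℕ} {A : Fin m → Finset G}

lemma M_eq_sum (hdisj : ∀ i j, i ≠ j → Disjoint (A i) (A j)) (i : Fin m) (δ : G) :
    (((A i) ×ˢ ((univ.erase i).biUnion A)).filter (fun p => p.1 - p.2 = δ)).card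
      = ∑ j ∈ univ.erase i, (((A i) ×ˢ (A j)).filter (fun p => p.1 - p.2 = δ)).card := by
  rw [← Finset.card_biUnion]
  · congr 1
    ext p
    simp only [mem_biUnion, mem_filter, mem_product, mem_erase, mem_univ, true_and, and_true]
    tauto
  · intro j hj j' hj' hne
    refine Finset.disjoint_left.mpr (fun p hp hp' => ?_)
    exact (Finset.disjoint_left.mp (hdisj j j' hne))
      (Finset.mem_product.mp (Finset.mem_filter.mp hp).1).2
      (Finset.mem_product.mp (Finset.mem_filter.mp hp').1).2

lemma M_eq_two (h : IsSEDF m k 2 A) (i : Fin m) {δ : G} (hδ : δ ≠ 0) :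
    (((A i) ×ˢ ((univ.erase i).biUnion A)).filter (fun p => p.1 - p.2 = δ)).card = 2 := by
  obtain ⟨-, -, hdisj, hlam⟩ := h
  have hc := congrArg (Multiset.count δ) (hlam i)
  rw [Multiset.count_sum', Multiset.count_nsmul,
    Multiset.count_eq_one_of_mem (univ.erase (0 : G)).nodup
      (Finset.mem_erase.mpr ⟨hδ, mem_univ _⟩)] at hc
  rw [M_eq_sum hdisj]
  rw [Finset.sum_congr rfl (fun j _ => (count_extDiffs (A i) (A j) δ).symm)]
  omega

lemma card_swap (B C : Finset G) (δ : G) :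
    ((B ×ˢ C).filter (fun p => p.1 - p.2 = δ)).card
      = ((C ×ˢ B).filter (fun p => p.1 - p.2 = -δ)).card := by
  apply Finset.card_bij (fun p _ => Prod.swap p)
  · intro p hp
    simp only [mem_filter, mem_product] at hp ⊢
    refine ⟨⟨hp.1.2, hp.1.1⟩, ?_⟩
    show p.2 - p.1 = -δ
    rw [← hp.2, neg_sub]
  · intro p hp q hq hpq
    exact Prod.swap_injective hpq
  · intro q hq
    refine ⟨Prod.swap q, ?_, (Prod.swap_swap q).symm⟩
    simp only [mem_filter, mem_product] at hq ⊢
    refine ⟨⟨hq.1.2, hq.1.1⟩, ?_⟩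
    show q.2 - q.1 = δ
    rw [← neg_sub q.1 q.2, hq.2, neg_neg]

end Aux

theorem stmt4 {G : Type*} [AddCommGroup G] [Fintype G] [DecidableEq G]
    {m k : ℕ} {A : Fin m → Finset G} (h : IsSEDF m k 2 A)
    (hm : 3 ≤ m) (hk : 3 ≤ k) :
    2 * (k - 1) * (m - 2) ≤ k * (m - 1) := by
  classical
  have hdisj := h.2.2.1
  have hcard := h.2.1
  have hm0 : 0 < m := by omega
  set i₀ : Fin m := ⟨0, hm0⟩ with hi₀
  set U : Finset G := (univ.erase i₀).biUnion A with hU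
  have hmemU : ∀ {d : G}, d ∈ U ↔ ∃ j, j ≠ i₀ ∧ d ∈ A j := by
    intro d
    rw [hU]
    simp only [mem_biUnion, mem_erase, mem_univ, and_true, true_and]
  have hpart : ∀ {c : G} {s t : Fin m}, c ∈ A s → c ∈ A t → s = t := by
    intro c s t hs ht
    by_contra hne
    exact (Finset.disjoint_left.mp (hdisj s t hne)) hs ht
  have hUcard : U.card = (m - 1) * k := by
    rw [hU, Finset.card_biUnion (fun j _ j' _ hne => hdisj j j' hne)]
    rw [Finset.sum_congr rfl (fun j _ => hcard j), Finset.sum_const,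
      Finset.card_erase_of_mem (mem_univ _), Finset.card_univ, Fintype.card_fin, smul_eq_mul]
  obtain ⟨x0, hx0⟩ : (A i₀).Nonempty := by
    rw [← Finset.card_pos, hcard]; omega
  set W : G → Finset (G × G) := fun δ =>
    (U ×ˢ U).filter (fun q => q.1 - q.2 = δ ∧ ¬ ∃ t, q.1 ∈ A t ∧ q.2 ∈ A t) with hW
  -- each nonzero δ has exactly 2(m-1)-2 representations as an external difference
  -- between two blocks, neither of which is A i₀
  have hWcard : ∀ δ : G, δ ≠ 0 → (W δ).card = 2 * (m - 1) - 2 := by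
    intro δ hδ
    have hdecomp : W δ = (univ.erase i₀).biUnion
        (fun s => (A s ×ˢ (U \ A s)).filter (fun q => q.1 - q.2 = δ)) := by
      ext q
      simp only [hW, mem_filter, mem_product, mem_biUnion, mem_sdiff, mem_erase, mem_univ,
        true_and, and_true]
      constructor
      · rintro ⟨⟨h1, h2⟩, h3, h4⟩
        obtain ⟨s, hs0, hqs⟩ := hmemU.mp h1
        exact ⟨s, hs0, ⟨hqs, h2, fun hq2 => h4 ⟨s, hqs, hq2⟩⟩, h3⟩
      · rintro ⟨s, hs0, ⟨hqs, hq2U, hq2s⟩, h3⟩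
        refine ⟨⟨hmemU.mpr ⟨s, hs0, hqs⟩, hq2U⟩, h3, ?_⟩
        rintro ⟨t, ht1, ht2⟩
        exact hq2s (by rw [hpart hqs ht1]; exact ht2)
    have hdisjW : ∀ s ∈ univ.erase i₀, ∀ s' ∈ univ.erase i₀, s ≠ s' →
        Disjoint ((A s ×ˢ (U \ A s)).filter (fun q => q.1 - q.2 = δ))
                 ((A s' ×ˢ (U \ A s')).filter (fun q => q.1 - q.2 = δ)) := by
      intro s _ s' _ hne
      refine Finset.disjoint_left.mpr (fun q hq hq' => ?_)
      exact (Finset.disjoint_left.mp (hdisj s s' hne))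
        (mem_product.mp (mem_filter.mp hq).1).1 (mem_product.mp (mem_filter.mp hq').1).1
    rw [hdecomp, Finset.card_biUnion hdisjW]
    have hsplit : ∀ s ∈ univ.erase i₀,
        ((A s ×ˢ (U \ A s)).filter (fun q => q.1 - q.2 = δ)).card
          + ((A s ×ˢ A i₀).filter (fun q => q.1 - q.2 = δ)).card
        = ((A s ×ˢ ((univ.erase s).biUnion A)).filter (fun q => q.1 - q.2 = δ)).card := by
      intro s hs
      have hs0 : s ≠ i₀ := (mem_erase.mp hs).1
      have hsetU : (univ.erase s).biUnion A = (U \ A s) ∪ A i₀ := by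
        ext d
        simp only [mem_biUnion, mem_erase, mem_univ, true_and, and_true, mem_union, mem_sdiff]
        constructor
        · rintro ⟨j, hjs, hdj⟩
          by_cases hj0 : j = i₀
          · exact Or.inr (hj0 ▸ hdj)
          · exact Or.inl ⟨hmemU.mpr ⟨j, hj0, hdj⟩, fun hds => hjs (hpart hdj hds)⟩
        · rintro (⟨hdU, hds⟩ | hd0)
          · obtain ⟨j, hj0, hdj⟩ := hmemU.mp hdU
            exact ⟨j, fun hjs => hds (by rw [← hjs]; exact hdj), hdj⟩
          · exact ⟨i₀, Ne.symm hs0, hd0⟩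
      have hdisj2 : Disjoint ((A s ×ˢ (U \ A s)).filter (fun q => q.1 - q.2 = δ))
          ((A s ×ˢ A i₀).filter (fun q => q.1 - q.2 = δ)) := by
        refine Finset.disjoint_left.mpr (fun q hq hq' => ?_)
        have h1 : q.2 ∈ U := (mem_sdiff.mp (mem_product.mp (mem_filter.mp hq).1).2).1
        have h2 : q.2 ∈ A i₀ := (mem_product.mp (mem_filter.mp hq').1).2
        obtain ⟨j, hj0, hdj⟩ := hmemU.mp h1
        exact hj0 (hpart hdj h2)
      rw [hsetU, Finset.product_union, Finset.filter_union,
        Finset.card_union_of_disjoint hdisj2]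
    have e1 : ∑ s ∈ univ.erase i₀,
        (((A s ×ˢ (U \ A s)).filter (fun q => q.1 - q.2 = δ)).card
          + ((A s ×ˢ A i₀).filter (fun q => q.1 - q.2 = δ)).card) = 2 * (m - 1) := by
      rw [Finset.sum_congr rfl hsplit,
        Finset.sum_congr rfl (fun s _ => M_eq_two h s hδ), Finset.sum_const,
        Finset.card_erase_of_mem (mem_univ _), Finset.card_univ, Fintype.card_fin, smul_eq_mul]
      omega
    have e2 : ∑ s ∈ univ.erase i₀,
        ((A s ×ˢ A i₀).filter (fun q => q.1 - q.2 = δ)).card = 2 := by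
      rw [Finset.sum_congr rfl (fun s _ => card_swap (A s) (A i₀) δ),
        ← M_eq_sum hdisj i₀ (-δ), M_eq_two h i₀ (neg_ne_zero.mpr hδ)]
    rw [Finset.sum_add_distrib] at e1
    omega
  -- the triple set
  set T : Finset (G × G × G) := ((A i₀).erase x0).biUnion
      (fun x => {x} ×ˢ (W (x - x0))) with hT
  have hTmem : ∀ p : G × G × G, p ∈ T ↔ p.1 ∈ (A i₀).erase x0 ∧ p.2 ∈ W (p.1 - x0) := by
    intro p
    rw [hT]
    simp only [mem_biUnion, mem_product, mem_singleton]
    constructor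
    · rintro ⟨x, hx, rfl, hpw⟩
      exact ⟨hx, hpw⟩
    · rintro ⟨h1, h2⟩
      exact ⟨p.1, h1, rfl, h2⟩
  have hTcard : T.card = (k - 1) * (2 * (m - 1) - 2) := by
    rw [hT, Finset.card_biUnion]
    · have e3 : ∀ x ∈ (A i₀).erase x0, ({x} ×ˢ (W (x - x0))).card = 2 * (m - 1) - 2 := by
        intro x hx
        rw [Finset.card_product, Finset.card_singleton, one_mul]
        exact hWcard _ (sub_ne_zero_of_ne (Finset.mem_erase.mp hx).1)
      rw [Finset.sum_congr rfl e3, Finset.sum_const, Finset.card_erase_of_mem hx0, hcard,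
        smul_eq_mul]
    · intro x hx y hy hne
      refine Finset.disjoint_left.mpr (fun p hp hp' => ?_)
      have h1 : p.1 = x := (Finset.mem_singleton.mp (mem_product.mp hp).1)
      have h2 : p.1 = y := (Finset.mem_singleton.mp (mem_product.mp hp').1)
      exact hne (h1 ▸ h2 ▸ rfl)
  -- injection from T into U via the third coordinate
  have hinj : T.card ≤ U.card := by
    apply Finset.card_le_card_of_injOn (fun p => p.2.2)
    · intro p hp
      have h2 := ((hTmem p).mp hp).2
      rw [hW] at h2
      exact (Finset.mem_product.mp (Finset.mem_filter.mp h2).1).2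
    · intro p hp q hq hpq
      simp only [Finset.mem_coe] at hp hq
      have hpq' : p.2.2 = q.2.2 := hpq
      obtain ⟨hp1, hp2⟩ := (hTmem p).mp hp
      obtain ⟨hq1, hq2⟩ := (hTmem q).mp hq
      rw [hW] at hp2 hq2
      simp only [mem_filter, mem_product] at hp2 hq2
      obtain ⟨⟨hpcU, hpdU⟩, hpd, hpns⟩ := hp2
      obtain ⟨⟨hqcU, hqdU⟩, hqd, hqns⟩ := hq2
      have hxx : p.1 = q.1 := by
        by_contra hxx
        obtain ⟨t, ht0, htd⟩ := hmemU.mp hpdU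
        have hdx0 : p.2.2 ≠ x0 := by
          intro he
          exact ht0 (hpart htd (he ▸ hx0))
        have hδ : x0 - p.2.2 ≠ 0 := sub_ne_zero_of_ne (Ne.symm hdx0)
        have hM := M_eq_two h i₀ hδ
        rw [← hU] at hM
        have hsub : ({(x0, p.2.2), (p.1, p.2.1), (q.1, q.2.1)} : Finset (G × G)) ⊆
            (A i₀ ×ˢ U).filter (fun r => r.1 - r.2 = x0 - p.2.2) := by
          intro r hr
          simp only [mem_insert, mem_singleton] at hr
          rcases hr with rfl | rfl | rfl
          · exact mem_filter.mpr ⟨mem_product.mpr ⟨hx0, hpdU⟩, rfl⟩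
          · refine mem_filter.mpr ⟨mem_product.mpr ⟨(mem_erase.mp hp1).2, hpcU⟩, ?_⟩
            have h1 : p.2.1 - p.1 = p.2.2 - x0 := sub_eq_sub_iff_sub_eq_sub.mp hpd
            show p.1 - p.2.1 = x0 - p.2.2
            rw [← neg_sub p.2.1 p.1, h1, neg_sub]
          · refine mem_filter.mpr ⟨mem_product.mpr ⟨(mem_erase.mp hq1).2, hqcU⟩, ?_⟩
            have h1 : q.2.1 - q.1 = q.2.2 - x0 := sub_eq_sub_iff_sub_eq_sub.mp hqd
            show q.1 - q.2.1 = x0 - p.2.2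
            rw [← neg_sub q.2.1 q.1, h1, ← hpq', neg_sub]
        have hne1 : (x0, p.2.2) ≠ (p.1, p.2.1) := by
          intro he
          exact (mem_erase.mp hp1).1 (Prod.ext_iff.mp he).1.symm
        have hne2 : (x0, p.2.2) ≠ (q.1, q.2.1) := by
          intro he
          exact (mem_erase.mp hq1).1 (Prod.ext_iff.mp he).1.symm
        have hne3 : (p.1, p.2.1) ≠ (q.1, q.2.1) := by
          intro he
          exact hxx (Prod.ext_iff.mp he).1
        have hcard3 : ({(x0, p.2.2), (p.1, p.2.1), (q.1, q.2.1)} : Finset (G × G)).card = 3 := by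
          rw [Finset.card_insert_of_notMem (by simp [hne1, hne2]),
            Finset.card_insert_of_notMem (by simp [hne3]), Finset.card_singleton]
        have hle := Finset.card_le_card hsub
        rw [hcard3, hM] at hle
        omega
      have hcc : p.2.1 = q.2.1 := by
        have e1 : p.2.1 = p.2.2 + (p.1 - x0) := by rw [← hpd]; abel
        have e2 : q.2.1 = q.2.2 + (q.1 - x0) := by rw [← hqd]; abel
        rw [e1, e2, hpq', hxx]
      exact Prod.ext hxx (Prod.ext hcc hpq')
  rw [hTcard, hUcard] at hinj
  have e4 : 2 * (m - 1) - 2 = 2 * (m - 2) := by omega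
  rw [e4] at hinj
  calc 2 * (k - 1) * (m - 2) = (k - 1) * (2 * (m - 2)) := by ring
    _ ≤ (m - 1) * k := hinj
    _ = k * (m - 1) := by ring
end

section
/- Let {A_1,...,A_m} be an (n,m,k,λ)-SEDF with m ≥ 3, λ ≥ 2, k ≥ λ+1. Fix v ∈ A_1 and let I = {v - a : a ∈ A_1, a ≠ v}. Then for every v' ∈ A_i with i ≠ 1, the set E_{v'} = {v' - a : a ∈ A_j, j ≠ 1, j ≠ i} satisfies |E_{v'} ∩ I| ≤ λ - 1. -/
open Finset

/-!
Put `x = v - v'`, nonzero since `A i₀` and `A i` are disjoint. Each `d` in the intersection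
gives a representation `x = (v - d) - (v' - d)` of `x` as an external difference from `A i₀`,
with `v - d ∈ A i₀ \ {v}`; distinct `d` give distinct representations, none of them the
representation `x = v - v'`. The SEDF condition allows exactly `λ` representations in total.
-/

section
variable {G : Type*} [AddCommGroup G] [DecidableEq G]

theorem count_extDiffs_s7 (A B : Finset G) (x : G) :
    (extDiffs A B).count x = #{p ∈ A ×ˢ B | p.1 - p.2 = x} := by
  simp only [extDiffs, Multiset.count_map, eq_comm (a := x)]
  rfl

def extDiffPairs {m : ℕ} (A : Fin m → Finset G) (i : Fin m) (x : G) : Finset (G × G) :=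
  (univ.erase i).biUnion fun j => {p ∈ A i ×ˢ A j | p.1 - p.2 = x}

theorem mem_extDiffPairs {m : ℕ} {A : Fin m → Finset G} {i : Fin m} {x : G} {p : G × G} :
    p ∈ extDiffPairs A i x ↔ ∃ j ≠ i, p.1 ∈ A i ∧ p.2 ∈ A j ∧ p.1 - p.2 = x := by
  simp [extDiffPairs, and_assoc]

theorem card_extDiffPairs_eq_count {m : ℕ} {A : Fin m → Finset G}
    (hdisj : ∀ i j, i ≠ j → Disjoint (A i) (A j)) (i : Fin m) (x : G) :
    #(extDiffPairs A i x) = (∑ j ∈ univ.erase i, extDiffs (A i) (A j)).count x := by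
  rw [extDiffPairs, card_biUnion, Multiset.count_sum']
  · simp only [count_extDiffs_s7]
  · exact fun j _ j' _ hjj' =>
      disjoint_filter_filter (disjoint_product.mpr (Or.inr (hdisj j j' hjj')))

theorem IsSEDF.card_extDiffPairs [Fintype G] {m k l : ℕ} {A : Fin m → Finset G}
    (h : IsSEDF m k l A) (i : Fin m) {x : G} (hx : x ≠ 0) :
    #(extDiffPairs A i x) = l := by
  obtain ⟨-, -, hdisj, hsum⟩ := h
  rw [card_extDiffPairs_eq_count hdisj, hsum i, Multiset.count_nsmul,
    Multiset.count_eq_one_of_mem (univ.erase 0).nodup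
      (mem_val.mpr (mem_erase.mpr ⟨hx, mem_univ x⟩)), mul_one]

theorem card_inter_lt_card_extDiffPairs {m : ℕ} {A : Fin m → Finset G}
    {i₀ i : Fin m} (hi : i ≠ i₀) {v v' : G} (hv : v ∈ A i₀) (hv' : v' ∈ A i) :
    #((((univ.erase i₀).erase i).biUnion fun j => (A j).image (v' - ·)) ∩
        ((A i₀).erase v).image (v - ·)) < #(extDiffPairs A i₀ (v - v')) := by
  have hvv' : (v, v') ∈ extDiffPairs A i₀ (v - v') :=
    mem_extDiffPairs.mpr ⟨i, hi, hv, hv', rfl⟩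
  refine lt_of_le_of_lt ?_ (card_erase_lt_of_mem hvv')
  refine card_le_card_of_injOn (fun d => (v - d, v' - d))
    (fun d hd => show (v - d, v' - d) ∈ _ from ?_)
    fun d _ d' _ hdd' => sub_right_injective (congrArg Prod.fst hdd')
  simp only [coe_inter, Set.mem_inter_iff, mem_coe, mem_biUnion, mem_image, mem_erase,
    mem_univ, and_true] at hd
  obtain ⟨⟨j, ⟨-, hj⟩, b, hb, hbd⟩, a, ⟨ha, haA⟩, had⟩ := hd
  have hva : v - d = a := by rw [← had]; abel
  have hvb : v' - d = b := by rw [← hbd]; abel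
  refine mem_erase.mpr ⟨fun e => ha (hva ▸ congrArg Prod.fst e), ?_⟩
  exact mem_extDiffPairs.mpr ⟨j, hj, hva ▸ haA, hvb ▸ hb, sub_sub_sub_cancel_right v v' d⟩

end

theorem stmt7_general {G : Type*} [AddCommGroup G] [Fintype G] [DecidableEq G]
    {m k l : ℕ} {A : Fin m → Finset G} (h : IsSEDF m k l A)
    (i₀ : Fin m) (v : G) (hv : v ∈ A i₀)
    (i : Fin m) (hi : i ≠ i₀) (v' : G) (hv' : v' ∈ A i) :
    ((((Finset.univ.erase i₀).erase i).biUnion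
        (fun j => (A j).image (fun a => v' - a))) ∩
      ((A i₀).erase v).image (fun a => v - a)).card ≤ l - 1 := by
  have hx : v - v' ≠ 0 := sub_ne_zero.mpr fun e =>
    disjoint_left.mp (h.2.2.1 i₀ i hi.symm) hv (e ▸ hv')
  have hlt := card_inter_lt_card_extDiffPairs hi hv hv'
  rw [h.card_extDiffPairs i₀ hx] at hlt
  omega

theorem stmt7 {G : Type*} [AddCommGroup G] [Fintype G] [DecidableEq G]
    {m k l : ℕ} {A : Fin m → Finset G} (h : IsSEDF m k l A)
    (hm : 3 ≤ m) (hl : 2 ≤ l) (hk : l + 1 ≤ k)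
    (i₀ : Fin m) (v : G) (hv : v ∈ A i₀)
    (i : Fin m) (hi : i ≠ i₀) (v' : G) (hv' : v' ∈ A i) :
    ((((Finset.univ.erase i₀).erase i).biUnion
        (fun j => (A j).image (fun a => v' - a))) ∩
      ((A i₀).erase v).image (fun a => v - a)).card ≤ l - 1 :=
  stmt7_general h i₀ v hv i hi v' hv'
end

section
/- Suppose λ ≥ 2 and there exists an (n,m,k,λ)-SEDF with m ≥ 3 and k ≥ λ+1. Then λ(k-1)(m-2) ≤ (λ-1)k(m-1). -/
open Finset

section Aux

set_option linter.unusedSectionVars false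

variable {G : Type*} [AddCommGroup G] [Fintype G] [DecidableEq G]

/-- number of pairs (x,y) ∈ X × Y with x - y = g -/
def dd (X Y : Finset G) (g : G) : ℕ := #((X ×ˢ Y).filter fun p => p.1 - p.2 = g)

lemma count_extDiffs_s8 (X Y : Finset G) (g : G) :
    (extDiffs X Y).count g = dd X Y g := by
  rw [extDiffs, Multiset.count_map]
  rw [show dd X Y g = Multiset.card ((X ×ˢ Y).val.filter (fun p => p.1 - p.2 = g)) from rfl]
  congr 1
  apply Multiset.filter_congr
  intro x _
  exact eq_comm

lemma dd_neg (X Y : Finset G) (g : G) : dd X Y g = dd Y X (-g) := by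
  refine Finset.card_bij' (fun p _ => (p.2, p.1)) (fun p _ => (p.2, p.1)) ?_ ?_
    (fun p _ => rfl) (fun p _ => rfl)
  · intro p hp
    rw [mem_filter, mem_product] at hp ⊢
    refine ⟨⟨hp.1.2, hp.1.1⟩, ?_⟩
    show p.2 - p.1 = -g
    rw [← hp.2]; abel
  · intro p hp
    rw [mem_filter, mem_product] at hp ⊢
    refine ⟨⟨hp.1.2, hp.1.1⟩, ?_⟩
    show p.2 - p.1 = g
    have := hp.2
    have h2 : p.2 - p.1 = -(p.1 - p.2) := by abel
    rw [h2, this, neg_neg]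

lemma dd_sum_eq (X Y : Finset G) : ∑ g : G, dd X Y g = X.card * Y.card := by
  rw [← Finset.card_product]
  exact (Finset.card_eq_sum_card_fiberwise (fun x _ => mem_univ _)).symm

lemma dd_self_zero (X : Finset G) : dd X X 0 = X.card := by
  have h : ((X ×ˢ X).filter fun p => p.1 - p.2 = (0:G)) = X.diag := by
    ext ⟨a, b⟩
    simp only [mem_filter, mem_product, Finset.mem_diag, sub_eq_zero]
    constructor
    · rintro ⟨⟨h1, _⟩, h3⟩; exact ⟨h1, h3⟩
    · rintro ⟨h1, rfl⟩; exact ⟨⟨h1, h1⟩, rfl⟩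
  rw [dd, h, diag_card]

/-- splitting a `dd` along a disjoint union in the second coordinate -/
lemma dd_biUnion {ι : Type*} [DecidableEq ι] (X : Finset G) (s : Finset ι) (f : ι → Finset G)
    (hdisj : ∀ x ∈ s, ∀ y ∈ s, x ≠ y → Disjoint (f x) (f y)) (g : G) :
    dd X (s.biUnion f) g = ∑ j ∈ s, dd X (f j) g := by
  rw [dd]
  have h : ((X ×ˢ s.biUnion f).filter fun p => p.1 - p.2 = g)
      = s.biUnion fun j => (X ×ˢ f j).filter fun p => p.1 - p.2 = g := by
    ext ⟨a, b⟩
    simp only [mem_filter, mem_product, mem_biUnion]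
    tauto
  have hd : ∀ x ∈ s, ∀ y ∈ s, x ≠ y → Disjoint
      ((X ×ˢ f x).filter fun p => p.1 - p.2 = g)
      ((X ×ˢ f y).filter fun p => p.1 - p.2 = g) := by
    intro x hx y hy hxy
    rw [Finset.disjoint_left]
    intro p hp hq
    rw [mem_filter, mem_product] at hp hq
    exact (Finset.disjoint_left.mp (hdisj x hx y hy hxy)) hp.1.2 hq.1.2
  rw [h, card_biUnion hd]; rfl

lemma dd_biUnion_left {ι : Type*} [DecidableEq ι] (Y : Finset G) (s : Finset ι) (f : ι → Finset G)
    (hdisj : ∀ x ∈ s, ∀ y ∈ s, x ≠ y → Disjoint (f x) (f y)) (g : G) :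
    dd (s.biUnion f) Y g = ∑ j ∈ s, dd (f j) Y g := by
  rw [dd]
  have h : (((s.biUnion f) ×ˢ Y).filter fun p => p.1 - p.2 = g)
      = s.biUnion fun j => (f j ×ˢ Y).filter fun p => p.1 - p.2 = g := by
    ext ⟨a, b⟩
    simp only [mem_filter, mem_product, mem_biUnion]
    tauto
  have hd : ∀ x ∈ s, ∀ y ∈ s, x ≠ y → Disjoint
      ((f x ×ˢ Y).filter fun p => p.1 - p.2 = g)
      ((f y ×ˢ Y).filter fun p => p.1 - p.2 = g) := by
    intro x hx y hy hxy
    rw [Finset.disjoint_left]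
    intro p hp hq
    rw [mem_filter, mem_product] at hp hq
    exact (Finset.disjoint_left.mp (hdisj x hx y hy hxy)) hp.1.1 hq.1.1
  rw [h, card_biUnion hd]; rfl

end Aux
section Aux2

set_option linter.unusedSectionVars false

variable {G : Type*} [AddCommGroup G] [Fintype G] [DecidableEq G]

lemma fiber1 (Ai B : Finset G) (g : G) :
    ((Ai ×ˢ B) ×ˢ (Ai ×ˢ B)).filter
      (fun p => (p.1.1 - p.1.2 = p.2.1 - p.2.2 ∧ p.1.1 ≠ p.2.1) ∧ p.1.1 - p.1.2 = g)
    = ((Ai ×ˢ B).filter fun q => q.1 - q.2 = g).offDiag := by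
  ext ⟨⟨a, b⟩, a', b'⟩
  simp only [Finset.mem_filter, Finset.mem_product, Finset.mem_offDiag]
  constructor
  · rintro ⟨⟨h1, h2⟩, ⟨hdiff, hne⟩, hg⟩
    refine ⟨⟨h1, hg⟩, ⟨h2, by rw [← hdiff]; exact hg⟩, fun hpq => hne (congrArg Prod.fst hpq)⟩
  · rintro ⟨⟨h1, hg1⟩, ⟨h2, hg2⟩, hne⟩
    refine ⟨⟨h1, h2⟩, ⟨by rw [hg1, hg2], fun haa => hne ?_⟩, hg1⟩
    have hb : b = b' := by
      apply sub_right_injective (b := a)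
      show a - b = a - b'
      rw [hg1, haa, hg2]
    rw [haa, hb]

lemma fiber2 (Ai B : Finset G) (hg : G) (hne : hg ≠ 0) :
    #(((Ai ×ˢ B) ×ˢ (Ai ×ˢ B)).filter
      (fun p => (p.1.1 - p.1.2 = p.2.1 - p.2.2 ∧ p.1.1 ≠ p.2.1) ∧ p.1.1 - p.2.1 = hg))
    = dd Ai Ai hg * dd B B hg := by
  rw [dd, dd, ← Finset.card_product]
  refine Finset.card_bij' (fun p _ => ((p.1.1, p.2.1), (p.1.2, p.2.2)))
    (fun q _ => ((q.1.1, q.2.1), (q.1.2, q.2.2))) ?_ ?_ (fun p _ => rfl) (fun q _ => rfl)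
  · intro p hp
    rw [Finset.mem_filter, Finset.mem_product] at hp
    obtain ⟨⟨hp1, hp2⟩, ⟨hdiff, _⟩, hfib⟩ := hp
    rw [Finset.mem_product] at hp1 hp2
    rw [Finset.mem_product, Finset.mem_filter, Finset.mem_filter,
      Finset.mem_product, Finset.mem_product]
    have h5 : p.1.1 - p.2.1 = p.1.2 - p.2.2 := sub_eq_sub_iff_sub_eq_sub.mp hdiff
    exact ⟨⟨⟨hp1.1, hp2.1⟩, hfib⟩, ⟨hp1.2, hp2.2⟩, by rw [← h5]; exact hfib⟩
  · intro q hq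
    rw [Finset.mem_product, Finset.mem_filter, Finset.mem_filter,
      Finset.mem_product, Finset.mem_product] at hq
    obtain ⟨⟨⟨ha, ha'⟩, hq1⟩, ⟨hb, hb'⟩, hq2⟩ := hq
    rw [Finset.mem_filter, Finset.mem_product, Finset.mem_product, Finset.mem_product]
    refine ⟨⟨⟨ha, hb⟩, ha', hb'⟩, ⟨?_, ?_⟩, hq1⟩
    · apply sub_eq_sub_iff_sub_eq_sub.mpr
      show q.1.1 - q.1.2 = q.2.1 - q.2.2
      rw [hq1, hq2]
    · show q.1.1 ≠ q.1.2
      intro hc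
      exact hne (by rw [← hq1, hc, sub_self])

end Aux2

theorem stmt8 {G : Type*} [AddCommGroup G] [Fintype G] [DecidableEq G]
    {m k l : ℕ} {A : Fin m → Finset G} (h : IsSEDF m k l A)
    (hl : 2 ≤ l) (hm : 3 ≤ m) (hk : l + 1 ≤ k) :
    l * (k - 1) * (m - 2) ≤ (l - 1) * k * (m - 1) := by
  obtain ⟨-, hcard, hdisj, hsedf⟩ := h
  have hi0 : 0 < m := by omega
  set i : Fin m := ⟨0, hi0⟩ with hidef
  set J : Finset (Fin m) := Finset.univ.erase i with hJ
  have hJcard : J.card = m - 1 := by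
    rw [hJ, Finset.card_erase_of_mem (Finset.mem_univ i), Finset.card_univ, Fintype.card_fin]
  set B : Finset G := J.biUnion A with hB
  have hdJ : ∀ x ∈ J, ∀ y ∈ J, x ≠ y → Disjoint (A x) (A y) := fun x _ y _ hxy => hdisj x y hxy
  have hBcard : B.card = k * (m - 1) := by
    rw [hB, Finset.card_biUnion hdJ,
      Finset.sum_congr rfl (fun j _ => hcard j), Finset.sum_const, hJcard, smul_eq_mul, mul_comm]
  -- the count coming from the SEDF property
  have hsum : ∀ (i' : Fin m) (g : G), g ≠ 0 →
      ∑ j ∈ Finset.univ.erase i', dd (A i') (A j) g = l := by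
    intro i' g hg
    have hc := congrArg (Multiset.count g) (hsedf i')
    rw [Multiset.count_sum', Multiset.count_nsmul] at hc
    simp only [count_extDiffs_s8] at hc
    rw [hc]
    have h1 : (Finset.univ.erase (0:G)).val.count g = 1 := by
      apply Multiset.count_eq_one_of_mem (Finset.univ.erase (0:G)).nodup
      rw [Finset.mem_val, Finset.mem_erase]
      exact ⟨hg, Finset.mem_univ g⟩
    rw [h1, mul_one]
  have hgB : ∀ g : G, g ≠ 0 → dd (A i) B g = l := by
    intro g hg
    rw [hB, dd_biUnion _ _ _ hdJ, hJ]
    exact hsum i g hg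
  have hzB : dd (A i) B 0 = 0 := by
    rw [dd, Finset.card_eq_zero, Finset.filter_eq_empty_iff]
    rintro ⟨a, b⟩ hab
    rw [Finset.mem_product] at hab
    intro hab0
    have hab1 : a = b := by rwa [sub_eq_zero] at hab0
    subst hab1
    obtain ⟨j, hjJ, hjb⟩ := Finset.mem_biUnion.mp (hB ▸ hab.2)
    have hji : j ≠ i := (Finset.mem_erase.mp hjJ).1
    exact (Finset.disjoint_left.mp (hdisj i j (Ne.symm hji))) hab.1 hjb
  -- lower bound for internal differences of B
  have hBB : ∀ g : G, g ≠ 0 → l * (m - 2) ≤ dd B B g := by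
    intro g hg
    rw [hB, dd_biUnion_left _ _ _ hdJ]
    have step1 : ∀ j ∈ J, l - dd (A j) (A i) g ≤ dd (A j) (J.biUnion A) g := by
      intro j hj
      rw [dd_biUnion _ _ _ hdJ]
      have hji : j ≠ i := (Finset.mem_erase.mp (hJ ▸ hj)).1
      have hiu : i ∈ Finset.univ.erase j := Finset.mem_erase.mpr ⟨Ne.symm hji, Finset.mem_univ i⟩
      have hsplit : dd (A j) (A i) g
          + ∑ j' ∈ (Finset.univ.erase j).erase i, dd (A j) (A j') g = l := by
        have h6 := Finset.add_sum_erase (Finset.univ.erase j) (fun j' => dd (A j) (A j') g) hiu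
        simpa using h6.trans (hsum j g hg)
      have hsub : (Finset.univ.erase j).erase i ⊆ J := by
        intro x hx
        rw [Finset.mem_erase, Finset.mem_erase] at hx
        rw [hJ, Finset.mem_erase]
        exact ⟨hx.1, Finset.mem_univ x⟩
      calc l - dd (A j) (A i) g
          = ∑ j' ∈ (Finset.univ.erase j).erase i, dd (A j) (A j') g := by omega
        _ ≤ ∑ j' ∈ J, dd (A j) (A j') g :=
            Finset.sum_le_sum_of_subset hsub
    have hsum2 : ∑ j ∈ J, dd (A j) (A i) g = l := by
      rw [Finset.sum_congr rfl (fun j _ => dd_neg (A j) (A i) g), hJ]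
      exact hsum i (-g) (neg_ne_zero.mpr hg)
    calc l * (m - 2)
        = ∑ j ∈ J, (l - dd (A j) (A i) g) := by
          rw [Finset.sum_tsub_distrib]
          · rw [Finset.sum_const, hJcard, smul_eq_mul, hsum2]
            rw [show m - 1 = (m - 2) + 1 by omega, add_mul, one_mul, Nat.add_sub_cancel, mul_comm]
          · intro j hj
            have hji : j ≠ i := (Finset.mem_erase.mp (hJ ▸ hj)).1
            have hiu : i ∈ Finset.univ.erase j :=
              Finset.mem_erase.mpr ⟨Ne.symm hji, Finset.mem_univ i⟩
            calc dd (A j) (A i) g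
                ≤ ∑ j' ∈ Finset.univ.erase j, dd (A j) (A j') g :=
                  Finset.single_le_sum (f := fun j' => dd (A j) (A j') g)
                    (fun _ _ => Nat.zero_le _) hiu
              _ = l := hsum j g hg
      _ ≤ ∑ j ∈ J, dd (A j) (J.biUnion A) g := Finset.sum_le_sum step1
  -- double counting
  have hS1 : #(((A i ×ˢ B) ×ˢ (A i ×ˢ B)).filter
      (fun p => p.1.1 - p.1.2 = p.2.1 - p.2.2 ∧ p.1.1 ≠ p.2.1))
      = (l - 1) * (k * (k * (m - 1))) := by
    rw [Finset.card_eq_sum_card_fiberwise (f := fun p => p.1.1 - p.1.2)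
      (t := Finset.univ) (fun x _ => Finset.mem_univ _)]
    have hterm : ∀ g : G,
        #(Finset.filter (fun p => p.1.1 - p.1.2 = g)
          (((A i ×ˢ B) ×ˢ (A i ×ˢ B)).filter
            (fun p => p.1.1 - p.1.2 = p.2.1 - p.2.2 ∧ p.1.1 ≠ p.2.1)))
        = (l - 1) * dd (A i) B g := by
      intro g
      rw [Finset.filter_filter, fiber1, Finset.offDiag_card]
      by_cases hg : g = 0
      · subst hg
        rw [show #((A i ×ˢ B).filter fun q => q.1 - q.2 = (0:G)) = dd (A i) B 0 from rfl, hzB]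
        simp
      · rw [show #((A i ×ˢ B).filter fun q => q.1 - q.2 = g) = dd (A i) B g from rfl,
          hgB g hg, Nat.sub_mul, one_mul]
    rw [Finset.sum_congr rfl (fun g _ => hterm g), ← Finset.mul_sum, dd_sum_eq, hcard i, hBcard]
  have hS2 : l * (m - 2) * (k * k - k) ≤
      #(((A i ×ˢ B) ×ˢ (A i ×ˢ B)).filter
      (fun p => p.1.1 - p.1.2 = p.2.1 - p.2.2 ∧ p.1.1 ≠ p.2.1)) := by
    have hfw : #(((A i ×ˢ B) ×ˢ (A i ×ˢ B)).filter
        (fun p => p.1.1 - p.1.2 = p.2.1 - p.2.2 ∧ p.1.1 ≠ p.2.1))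
        = ∑ g : G, #(Finset.filter (fun p => p.1.1 - p.2.1 = g)
          (((A i ×ˢ B) ×ˢ (A i ×ˢ B)).filter
            (fun p => p.1.1 - p.1.2 = p.2.1 - p.2.2 ∧ p.1.1 ≠ p.2.1))) :=
      Finset.card_eq_sum_card_fiberwise (fun x _ => Finset.mem_univ _)
    rw [hfw]
    have hzero : #(Finset.filter (fun p => p.1.1 - p.2.1 = (0:G))
        (((A i ×ˢ B) ×ˢ (A i ×ˢ B)).filter
          (fun p => p.1.1 - p.1.2 = p.2.1 - p.2.2 ∧ p.1.1 ≠ p.2.1))) = 0 := by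
      rw [Finset.card_eq_zero, Finset.filter_filter, Finset.filter_eq_empty_iff]
      rintro p -
      rintro ⟨⟨-, hne⟩, hzz⟩
      exact hne (by rwa [sub_eq_zero] at hzz)
    have hse := Finset.sum_erase (f := fun g : G =>
        #(Finset.filter (fun p => p.1.1 - p.2.1 = g)
          (((A i ×ˢ B) ×ˢ (A i ×ˢ B)).filter
            (fun p => p.1.1 - p.1.2 = p.2.1 - p.2.2 ∧ p.1.1 ≠ p.2.1)))) Finset.univ hzero
    rw [← hse]
    have hterm : ∀ g ∈ Finset.univ.erase (0:G),
        #(Finset.filter (fun p => p.1.1 - p.2.1 = g)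
          (((A i ×ˢ B) ×ˢ (A i ×ˢ B)).filter
            (fun p => p.1.1 - p.1.2 = p.2.1 - p.2.2 ∧ p.1.1 ≠ p.2.1)))
        = dd (A i) (A i) g * dd B B g := by
      intro g hg
      rw [Finset.filter_filter]
      exact fiber2 (A i) B g (Finset.mem_erase.mp hg).1
    rw [Finset.sum_congr rfl hterm]
    have hAA : ∑ g ∈ Finset.univ.erase (0:G), dd (A i) (A i) g = k * k - k := by
      have h1 := dd_sum_eq (A i) (A i)
      rw [hcard] at h1
      have h0 := dd_self_zero (A i)
      rw [hcard] at h0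
      have hsplit := Finset.add_sum_erase Finset.univ (fun g => dd (A i) (A i) g) (Finset.mem_univ (0:G))
      apply Nat.eq_sub_of_add_eq'
      rw [← h1, ← h0]
      simpa using hsplit
    calc l * (m - 2) * (k * k - k)
        = ∑ g ∈ Finset.univ.erase (0:G), dd (A i) (A i) g * (l * (m - 2)) := by
          rw [← Finset.sum_mul, hAA, mul_comm]
      _ ≤ ∑ g ∈ Finset.univ.erase (0:G), dd (A i) (A i) g * dd B B g :=
          Finset.sum_le_sum (fun g hg =>
            Nat.mul_le_mul_left _ (hBB g (Finset.mem_erase.mp hg).1))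
  have hchain : l * (m - 2) * (k * k - k) ≤ (l - 1) * (k * (k * (m - 1))) := le_of_le_of_eq (hS2.trans (le_of_eq hS1)) rfl
  have hkk : k * (k - 1) = k * k - k := by
    rw [Nat.sub_one, Nat.mul_pred]
  have hfinal : (l * (k - 1) * (m - 2)) * k ≤ ((l - 1) * k * (m - 1)) * k := by
    calc (l * (k - 1) * (m - 2)) * k
        = l * (m - 2) * (k * (k - 1)) := by ring
      _ = l * (m - 2) * (k * k - k) := by rw [hkk]
      _ ≤ (l - 1) * (k * (k * (m - 1))) := hchain
      _ = ((l - 1) * k * (m - 1)) * k := by ring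
  exact Nat.le_of_mul_le_mul_right hfinal (by omega)
end

section
/- Let q be a prime power with q ≡ 1 (mod 4), let C be the set of nonzero squares in GF(q) and A_2 = αC its nontrivial coset (α a primitive element). Then {C, αC} is a (q, 2, (q-1)/2, (q-1)/4)-SEDF in the additive group of GF(q). -/
/-!
Write `S` for the nonzero squares and `N = αS` for the nonsquares, and let `M` be the multiset of
differences `s - n`. Multiplying by `α` maps `S` to `N` and `N` to `α²S = S`, so it turns `M` into
the differences `n - s`, i.e. into `-M`; since `-1` is a square, `-S = S` and `-N = N`, so `-M = M`.
Hence `M` is invariant under multiplication by `α`, and so by every nonzero element, which forces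
`M` to take every nonzero value equally often. Counting, `|S| · |N| = ((q - 1) / 2)²` differences
are spread evenly over `q - 1` values, `(q - 1) / 4` times each.
-/

open Finset

section ExtDiffs

variable {G H : Type*} [AddCommGroup G] [DecidableEq G] [AddCommGroup H] [DecidableEq H]

theorem card_extDiffs (A B : Finset G) : Multiset.card (extDiffs A B) = #A * #B := by
  simp [extDiffs]

theorem zero_notMem_extDiffs {A B : Finset G} (h : Disjoint A B) : (0 : G) ∉ extDiffs A B := by
  simp only [extDiffs, Multiset.mem_map, Finset.mem_val, mem_product, sub_eq_zero, not_exists,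
    not_and]
  rintro ⟨a, b⟩ ⟨ha, hb⟩ hab
  exact disjoint_left.mp h ha (hab ▸ hb)

theorem extDiffs_comm (A B : Finset G) : extDiffs B A = (extDiffs A B).map Neg.neg := by
  rw [extDiffs, extDiffs, ← map_swap_product, map_val, Multiset.map_map, Multiset.map_map]
  congr 1
  ext p
  simp

theorem extDiffs_image (f : G →+ H) (hf : Function.Injective f) (A B : Finset G) :
    extDiffs (A.image f) (B.image f) = (extDiffs A B).map f := by
  rw [extDiffs, extDiffs, ← prodMap_image_product, image_val_of_injOn (hf.prodMap hf).injOn,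
    Multiset.map_map, Multiset.map_map]
  congr 1
  ext p
  simp

end ExtDiffs

theorem isSEDF_two {G : Type*} [AddCommGroup G] [Fintype G] [DecidableEq G] {k l : ℕ}
    {A B : Finset G} (hA : #A = k) (hB : #B = k) (hAB : Disjoint A B)
    (hAB' : extDiffs A B = l • (univ.erase 0).val) (hBA : extDiffs B A = l • (univ.erase 0).val) :
    IsSEDF 2 k l ![A, B] := by
  refine ⟨le_rfl, ?_, ?_, ?_⟩
  · intro i
    fin_cases i <;> assumption
  · intro i j hij
    fin_cases i <;> fin_cases j <;> simp_all [disjoint_comm]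
  · intro i
    fin_cases i
    · simpa [show univ.erase (0 : Fin 2) = {1} from rfl] using hAB'
    · simpa [show univ.erase (1 : Fin 2) = {0} from rfl] using hBA

theorem Finset.image_mul_image_mul {M : Type*} [Semigroup M] [DecidableEq M] (a b : M)
    (s : Finset M) : (s.image (a * ·)).image (b * ·) = s.image ((b * a) * ·) := by
  simp only [image_image, Function.comp_def, mul_assoc]

theorem extDiffs_image_mul {F : Type*} [Field F] [DecidableEq F] {u : F} (hu : u ≠ 0)
    (A B : Finset F) :
    extDiffs (A.image (u * ·)) (B.image (u * ·)) = (extDiffs A B).map (u * ·) :=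
  extDiffs_image (AddMonoidHom.mulLeft u) (mul_right_injective₀ hu) A B

theorem Multiset.map_mul_pow_eq_self {M : Type*} [Monoid M] {s : Multiset M} {a : M}
    (h : s.map (a * ·) = s) (j : ℕ) : s.map (a ^ j * ·) = s := by
  induction j with
  | zero => simp
  | succ j ih =>
    conv_rhs => rw [← h, ← ih, Multiset.map_map]
    congr 1
    ext x
    simp [pow_succ', mul_assoc]

theorem ne_zero_of_not_isSquare {M₀ : Type*} [MulZeroClass M₀] {a : M₀} (h : ¬IsSquare a) :
    a ≠ 0 := by
  rintro rfl
  exact h .zero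

section FiniteField

variable {F : Type*} [Field F] [Fintype F]

theorem not_isSquare_of_forall_pow_eq {α : F} (hα : ∀ x : F, x ≠ 0 → ∃ j : ℕ, α ^ j = x)
    (hF : ringChar F ≠ 2) : ¬IsSquare α := by
  rintro ⟨t, rfl⟩
  obtain ⟨a, ha⟩ := FiniteField.exists_nonsquare hF
  obtain ⟨j, rfl⟩ := hα a (by rintro rfl; exact ha ⟨0, by simp⟩)
  exact ha ⟨t ^ j, by rw [← mul_pow]⟩

theorem ringChar_ne_two_of_card_mod_two_eq_one (h : Fintype.card F % 2 = 1) :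
    ringChar F ≠ 2 := fun h2 => by
  have := FiniteField.even_card_of_char_two h2
  omega

variable [DecidableEq F]

theorem Multiset.eq_count_one_nsmul_of_forall_map_mul_eq {s : Multiset F} (h0 : 0 ∉ s)
    (hs : ∀ u ≠ 0, s.map (u * ·) = s) : s = s.count 1 • (univ.erase (0 : F)).val := by
  ext d
  rw [Multiset.count_nsmul]
  by_cases hd : d = 0
  · subst hd
    simp [Multiset.count_eq_zero.mpr h0]
  · have hcount : s.count d = s.count 1 := calc
      s.count d = (s.map (d * ·)).count (d * 1) := by rw [hs d hd, mul_one]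
      _ = s.count 1 := Multiset.count_map_eq_count' _ _ (mul_right_injective₀ hd) _
    rw [hcount, Multiset.count_eq_one_of_mem (univ.erase 0).nodup
      (mem_erase.mpr ⟨hd, mem_univ d⟩), mul_one]

variable (F) in
def nonzeroSquares : Finset F := univ.filter (fun x : F => x ≠ 0 ∧ ∃ y, y * y = x)

theorem mem_nonzeroSquares {x : F} : x ∈ nonzeroSquares F ↔ x ≠ 0 ∧ IsSquare x := by
  simp [nonzeroSquares, IsSquare, eq_comm]

theorem image_mul_nonzeroSquares {u : F} (hu0 : u ≠ 0) (hu : IsSquare u) :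
    (nonzeroSquares F).image (u * ·) = nonzeroSquares F := by
  refine eq_of_subset_of_card_le ?_ (card_image_of_injective _ (mul_right_injective₀ hu0)).ge
  simp only [subset_iff, mem_image, mem_nonzeroSquares]
  rintro _ ⟨x, ⟨hx0, hx⟩, rfl⟩
  exact ⟨mul_ne_zero hu0 hx0, hu.mul hx⟩

theorem image_mul_image_nonzeroSquares {a u : F} (hu0 : u ≠ 0) (hu : IsSquare u) :
    ((nonzeroSquares F).image (a * ·)).image (u * ·) = (nonzeroSquares F).image (a * ·) := by
  rw [image_mul_image_mul, mul_comm, ← image_mul_image_mul, image_mul_nonzeroSquares hu0 hu]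

theorem disjoint_nonzeroSquares_image_mul {a : F} (ha : ¬IsSquare a) :
    Disjoint (nonzeroSquares F) ((nonzeroSquares F).image (a * ·)) := by
  simp only [disjoint_left, mem_image, mem_nonzeroSquares, not_exists, not_and]
  rintro _ ⟨-, hx⟩ y ⟨hy0, hy⟩ rfl
  exact ha (by simpa [hy0] using hx.div hy)

theorem extDiffs_image_mul_nonzeroSquares_comm (hneg : IsSquare (-1 : F)) (a : F) :
    extDiffs ((nonzeroSquares F).image (a * ·)) (nonzeroSquares F) =
      extDiffs (nonzeroSquares F) ((nonzeroSquares F).image (a * ·)) := by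
  have hneg_eq : (Neg.neg : F → F) = ((-1) * ·) := funext fun x => (neg_one_mul x).symm
  rw [extDiffs_comm, hneg_eq, ← extDiffs_image_mul (neg_ne_zero.mpr one_ne_zero),
    image_mul_nonzeroSquares (neg_ne_zero.mpr one_ne_zero) hneg,
    image_mul_image_nonzeroSquares (neg_ne_zero.mpr one_ne_zero) hneg]

variable {α : F} (hα : ∀ x : F, x ≠ 0 → ∃ j : ℕ, α ^ j = x)
include hα

theorem mem_nonzeroSquares_or_mem_image_mul {x : F} (hx : x ≠ 0) :
    x ∈ nonzeroSquares F ∨ x ∈ (nonzeroSquares F).image (α * ·) := by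
  obtain ⟨j, rfl⟩ := hα x hx
  simp only [mem_image, mem_nonzeroSquares]
  rcases Nat.even_or_odd j with ⟨k, rfl⟩ | ⟨k, rfl⟩
  · exact .inl ⟨hx, α ^ k, pow_add α k k⟩
  · have hα0 : α ≠ 0 := by rintro rfl; simp at hx
    exact .inr ⟨(α ^ k) ^ 2, ⟨pow_ne_zero _ (pow_ne_zero _ hα0), IsSquare.sq _⟩, by ring⟩

theorem two_mul_card_nonzeroSquares (hF : ringChar F ≠ 2) :
    2 * #(nonzeroSquares F) = Fintype.card F - 1 := by
  have hα_sq := not_isSquare_of_forall_pow_eq hα hF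
  have hα0 := ne_zero_of_not_isSquare hα_sq
  have hunion : nonzeroSquares F ∪ (nonzeroSquares F).image (α * ·) = univ.erase 0 := by
    ext x
    refine ⟨fun hx => mem_erase.mpr ⟨?_, mem_univ x⟩,
      fun hx => mem_union.mpr (mem_nonzeroSquares_or_mem_image_mul hα (ne_of_mem_erase hx))⟩
    simp only [mem_union, mem_image, mem_nonzeroSquares] at hx
    rcases hx with ⟨hx0, -⟩ | ⟨y, ⟨hy0, -⟩, rfl⟩
    exacts [hx0, mul_ne_zero hα0 hy0]
  rw [← card_univ, ← card_erase_of_mem (mem_univ 0), ← hunion,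
    card_union_of_disjoint (disjoint_nonzeroSquares_image_mul hα_sq),
    card_image_of_injective _ (mul_right_injective₀ hα0), two_mul]

theorem map_mul_extDiffs_nonzeroSquares (hF : ringChar F ≠ 2) (hneg : IsSquare (-1 : F))
    {u : F} (hu : u ≠ 0) :
    (extDiffs (nonzeroSquares F) ((nonzeroSquares F).image (α * ·))).map (u * ·) =
      extDiffs (nonzeroSquares F) ((nonzeroSquares F).image (α * ·)) := by
  have hα0 := ne_zero_of_not_isSquare (not_isSquare_of_forall_pow_eq hα hF)
  obtain ⟨j, rfl⟩ := hα u hu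
  refine Multiset.map_mul_pow_eq_self ?_ j
  rw [← extDiffs_image_mul hα0, image_mul_image_mul,
    image_mul_nonzeroSquares (mul_self_ne_zero.mpr hα0) (.mul_self α),
    extDiffs_image_mul_nonzeroSquares_comm hneg]

theorem extDiffs_nonzeroSquares_image_mul (hq : Fintype.card F % 4 = 1) :
    extDiffs (nonzeroSquares F) ((nonzeroSquares F).image (α * ·)) =
      ((Fintype.card F - 1) / 4) • (univ.erase (0 : F)).val := by
  have hF := ringChar_ne_two_of_card_mod_two_eq_one (F := F) (by omega)
  have hneg : IsSquare (-1 : F) := FiniteField.isSquare_neg_one_iff.mpr (by omega)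
  have hα_sq := not_isSquare_of_forall_pow_eq hα hF
  have hα0 := ne_zero_of_not_isSquare hα_sq
  set M := extDiffs (nonzeroSquares F) ((nonzeroSquares F).image (α * ·))
  have hM : M = M.count 1 • (univ.erase (0 : F)).val :=
    Multiset.eq_count_one_nsmul_of_forall_map_mul_eq
      (zero_notMem_extDiffs (disjoint_nonzeroSquares_image_mul hα_sq))
      fun u hu => map_mul_extDiffs_nonzeroSquares hα hF hneg hu
  suffices M.count 1 = (Fintype.card F - 1) / 4 by rwa [← this]
  have hcard := congrArg Multiset.card hM
  have hS := two_mul_card_nonzeroSquares hα hF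
  rw [card_extDiffs, card_image_of_injective _ (mul_right_injective₀ hα0),
    Multiset.card_nsmul, card_val, card_erase_of_mem (mem_univ 0), card_univ, ← hS] at hcard
  have hS_pos : 0 < #(nonzeroSquares F) := by
    have := Fintype.one_lt_card (α := F)
    omega
  have : #(nonzeroSquares F) = 2 * M.count 1 :=
    Nat.eq_of_mul_eq_mul_left hS_pos (by rw [hcard]; ring)
  omega

end FiniteField

theorem stmt14 {F : Type*} [Field F] [Fintype F] [DecidableEq F]
    (hq : Fintype.card F % 4 = 1) (α : F)
    (hα : ∀ x : F, x ≠ 0 → ∃ j : ℕ, α ^ j = x) :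
    IsSEDF 2 ((Fintype.card F - 1) / 2) ((Fintype.card F - 1) / 4)
      ![Finset.univ.filter (fun x : F => x ≠ 0 ∧ ∃ y, y * y = x),
        (Finset.univ.filter (fun x : F => x ≠ 0 ∧ ∃ y, y * y = x)).image (fun x => α * x)] := by
  change IsSEDF 2 _ _ ![nonzeroSquares F, (nonzeroSquares F).image (α * ·)]
  have hF := ringChar_ne_two_of_card_mod_two_eq_one (F := F) (by omega)
  have hα_sq := not_isSquare_of_forall_pow_eq hα hF
  have hS : #(nonzeroSquares F) = (Fintype.card F - 1) / 2 := by
    have := two_mul_card_nonzeroSquares hα hF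
    omega
  have hSN := extDiffs_nonzeroSquares_image_mul hα hq
  refine isSEDF_two hS ?_ (disjoint_nonzeroSquares_image_mul hα_sq) hSN ?_
  · rw [card_image_of_injective _ (mul_right_injective₀ (ne_zero_of_not_isSquare hα_sq)), hS]
  · rw [extDiffs_image_mul_nonzeroSquares_comm
      (FiniteField.isSquare_neg_one_iff (F := F) |>.mpr (by omega)), hSN]
end

section
/- Let G be an additive abelian group of order v, D_1 a Paley (v,(v-1)/2,(v-5)/4,(v-1)/4) PDS in G, and D_2 = G*\D_1 (where G* denotes the nonzero elements). Then {D_1, D_2} is a (v, 2, (v-1)/2, (v-1)/4)-SEDF. -/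
open Finset

/-- `D` is a `(v, k, l, mu)` partial difference set in `G`: `|G| = v`, `|D| = k`, and the
multiset of differences of distinct elements of `D` contains each nonzero element of `D`
exactly `l` times and each nonzero element outside `D` exactly `mu` times. -/
def IsPDS {G : Type*} [AddCommGroup G] [Fintype G] [DecidableEq G]
    (v k l mu : ℕ) (D : Finset G) : Prop :=
  Fintype.card G = v ∧ D.card = k ∧
  ∀ g : G, g ≠ 0 →
    Multiset.count g
      ((((D ×ˢ D).filter (fun p => p.1 ≠ p.2)).val).map (fun p => p.1 - p.2)) =
    if g ∈ D then l else mu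

/-- A regular PDS: a PDS with `0 ∉ D` and `D = -D`. -/
def IsRegularPDS {G : Type*} [AddCommGroup G] [Fintype G] [DecidableEq G]
    (v k l mu : ℕ) (D : Finset G) : Prop :=
  IsPDS v k l mu D ∧ (0 : G) ∉ D ∧ ∀ d ∈ D, -d ∈ D

lemma count_extDiffs_s16 {G : Type*} [AddCommGroup G] [DecidableEq G] (A B : Finset G) (g : G) :
    Multiset.count g (extDiffs A B) = (A.filter (fun x => x - g ∈ B)).card := by
  rw [extDiffs, Multiset.count_map, ← Finset.filter_val]
  show ((A ×ˢ B).filter (fun p => g = p.1 - p.2)).card = _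
  apply Finset.card_bij' (fun p _ => p.1) (fun x _ => (x, x - g))
  · intro p hp
    simp only [mem_filter, mem_product] at hp
    have h2 : p.2 = p.1 - g := by rw [hp.2]; abel
    exact mem_filter.2 ⟨hp.1.1, by rw [← h2]; exact hp.1.2⟩
  · intro x hx
    simp only [mem_filter] at hx ⊢
    exact ⟨by simp [mem_product, hx.1, hx.2], by abel⟩
  · intro p hp
    simp only [mem_filter, mem_product] at hp
    have h2 : p.2 = p.1 - g := by rw [hp.2]; abel
    simp [← h2]
  · intro x hx; rfl

lemma count_PDS {G : Type*} [AddCommGroup G] [DecidableEq G] (D : Finset G) (g : G) (hg : g ≠ 0) :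
    Multiset.count g ((((D ×ˢ D).filter (fun p => p.1 ≠ p.2)).val).map (fun p => p.1 - p.2))
      = (D.filter (fun x => x - g ∈ D)).card := by
  rw [Multiset.count_map, ← Finset.filter_val]
  show (((D ×ˢ D).filter _).filter (fun p => g = p.1 - p.2)).card = _
  rw [Finset.filter_filter]
  apply Finset.card_bij' (fun p _ => p.1) (fun x _ => (x, x - g))
  · intro p hp
    simp only [mem_filter, mem_product] at hp
    have h2 : p.2 = p.1 - g := by rw [hp.2.2]; abel
    exact mem_filter.2 ⟨hp.1.1, by rw [← h2]; exact hp.1.2⟩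
  · intro x hx
    simp only [mem_filter] at hx ⊢
    refine ⟨by simp [mem_product, hx.1, hx.2], ?_, by abel⟩
    intro h
    exact hg (sub_eq_self.mp h.symm)
  · intro p hp
    simp only [mem_filter, mem_product] at hp
    have h2 : p.2 = p.1 - g := by rw [hp.2.2]; abel
    simp [← h2]
  · intro x hx; rfl

theorem stmt16 {G : Type*} [AddCommGroup G] [Fintype G] [DecidableEq G]
    (v : ℕ) (hv : v % 4 = 1) (D₁ : Finset G)
    (h₁ : IsRegularPDS v ((v - 1) / 2) ((v - 5) / 4) ((v - 1) / 4) D₁) :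
    IsSEDF 2 ((v - 1) / 2) ((v - 1) / 4) ![D₁, (Finset.univ.erase (0 : G)) \ D₁] := by
  obtain ⟨⟨hcard, hk, hcount⟩, h0, -⟩ := h₁
  set D₂ : Finset G := (Finset.univ.erase (0 : G)) \ D₁ with hD₂
  have hsub : D₁ ⊆ Finset.univ.erase (0 : G) := by
    intro x hx
    exact mem_erase.2 ⟨fun h => h0 (h ▸ hx), mem_univ x⟩
  have hcerase : (Finset.univ.erase (0 : G)).card = v - 1 := by
    rw [card_erase_of_mem (mem_univ _), card_univ, hcard]
  have hdisj : Disjoint D₁ D₂ := disjoint_sdiff_self_right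
  have hcard2 : D₂.card = (v - 1) / 2 := by
    rw [hD₂, card_sdiff_of_subset hsub, hcerase, hk]
    omega
  -- key count
  have key : ∀ g : G, g ≠ 0 → (D₁.filter (fun x => x - g ∈ D₂)).card = (v - 1) / 4 := by
    intro g hg
    have hS : (D₁.filter (fun x => x - g ∈ D₁)).card
        = if g ∈ D₁ then (v - 5) / 4 else (v - 1) / 4 := by
      rw [← count_PDS D₁ g hg, hcount g hg]
    have hmemD₂ : ∀ x, x - g ∈ D₂ ↔ (¬(x = g ∨ x - g ∈ D₁)) := by
      intro x
      rw [hD₂, mem_sdiff, mem_erase]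
      constructor
      · rintro ⟨⟨h1, -⟩, h2⟩ (rfl | h)
        · exact h1 (sub_self _)
        · exact h2 h
      · intro h
        push_neg at h
        exact ⟨⟨fun h2 => h.1 (by rwa [sub_eq_zero] at h2), mem_univ _⟩, h.2⟩
    have hsplit := Finset.card_filter_add_card_filter_not
      (s := D₁) (p := fun x => x = g ∨ x - g ∈ D₁)
    have hcompl : D₁.filter (fun x => ¬(x = g ∨ x - g ∈ D₁)) = D₁.filter (fun x => x - g ∈ D₂) := by
      apply filter_congr
      intro x _
      simp only [hmemD₂ x]
    have hor : (D₁.filter (fun x => x = g ∨ x - g ∈ D₁)).card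
        = (if g ∈ D₁ then 1 else 0) + (D₁.filter (fun x => x - g ∈ D₁)).card := by
      rw [filter_or, card_union_of_disjoint, Finset.filter_eq']
      · split <;> simp
      · rw [Finset.filter_eq']
        split
        · rw [disjoint_singleton_left]
          simp only [mem_filter, not_and]
          intro _
          rw [sub_self]
          exact h0
        · exact disjoint_empty_left _
    rw [hcompl, hor] at hsplit
    rw [hk] at hsplit
    by_cases hgD : g ∈ D₁
    · have hne : D₁.Nonempty := ⟨g, hgD⟩
      have hk1 : 1 ≤ (v - 1) / 2 := by
        rw [← hk]; exact card_pos.2 hne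
      rw [hS] at hsplit
      simp only [hgD, if_true] at hsplit
      omega
    · rw [hS] at hsplit
      simp only [hgD, if_false] at hsplit
      omega
  have key2 : ∀ g : G, g ≠ 0 → (D₂.filter (fun x => x - g ∈ D₁)).card = (v - 1) / 4 := by
    intro g hg
    have : (D₂.filter (fun x => x - g ∈ D₁)).card
        = (D₁.filter (fun x => x - (-g) ∈ D₂)).card := by
      apply Finset.card_bij' (fun x _ => x - g) (fun y _ => y + g)
      · intro x hx
        simp only [mem_filter] at hx ⊢
        refine ⟨hx.2, ?_⟩
        have : x - g - (-g) = x := by abel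
        rw [this]; exact hx.1
      · intro y hy
        simp only [mem_filter] at hy ⊢
        have : y + g - g = y := by abel
        rw [this]
        have h2 : y - (-g) = y + g := by abel
        rw [h2] at hy
        exact ⟨hy.2, hy.1⟩
      · intro x _; abel
      · intro y _; abel
    rw [this, key (-g) (by simpa using hg)]
  -- count in the target multiset
  have hcnt_target : ∀ g : G, Multiset.count g (((v - 1) / 4) • (Finset.univ.erase (0 : G)).val)
      = if g = 0 then 0 else (v - 1) / 4 := by
    intro g
    rw [Multiset.count_nsmul]
    by_cases hg : g = 0
    · subst hg
      rw [Multiset.count_eq_zero_of_notMem]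
      · simp
      · rw [← Finset.mem_def]; simp
    · rw [Multiset.count_eq_one_of_mem (Finset.univ.erase (0 : G)).nodup
        (by rw [← Finset.mem_def]; simp [hg])]
      simp [hg]
  have hext1 : extDiffs D₁ D₂ = ((v - 1) / 4) • (Finset.univ.erase (0 : G)).val := by
    ext g
    rw [count_extDiffs_s16, hcnt_target]
    by_cases hg : g = 0
    · subst hg
      simp only [if_true, Finset.card_eq_zero]
      rw [Finset.filter_eq_empty_iff]
      intro x hx
      rw [sub_zero]
      exact fun hx2 => (disjoint_left.mp hdisj hx) hx2
    · rw [if_neg hg]; exact key g hg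
  have hext2 : extDiffs D₂ D₁ = ((v - 1) / 4) • (Finset.univ.erase (0 : G)).val := by
    ext g
    rw [count_extDiffs_s16, hcnt_target]
    by_cases hg : g = 0
    · subst hg
      simp only [if_true, Finset.card_eq_zero]
      rw [Finset.filter_eq_empty_iff]
      intro x hx
      rw [sub_zero]
      exact fun hx2 => (disjoint_left.mp hdisj hx2) hx
    · rw [if_neg hg]; exact key2 g hg
  refine ⟨le_refl 2, ?_, ?_, ?_⟩
  · intro i
    fin_cases i
    · simpa using hk
    · simpa using hcard2
  · intro i j hij
    fin_cases i <;> fin_cases j <;> simp_all <;>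
      first
        | exact hdisj
        | exact hdisj.symm
  · intro i
    fin_cases i
    · show (∑ j ∈ Finset.univ.erase (0 : Fin 2), extDiffs (![D₁, D₂] 0) (![D₁, D₂] j))
          = ((v - 1) / 4) • (Finset.univ.erase (0 : G)).val
      have he : (Finset.univ.erase (0 : Fin 2)) = {1} := by decide
      rw [he, Finset.sum_singleton]
      simpa using hext1
    · show (∑ j ∈ Finset.univ.erase (1 : Fin 2), extDiffs (![D₁, D₂] 1) (![D₁, D₂] j))
          = ((v - 1) / 4) • (Finset.univ.erase (0 : G)).val
      have he : (Finset.univ.erase (1 : Fin 2)) = {0} := by decide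
      rw [he, Finset.sum_singleton]
      simpa using hext2
end
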